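/- The function F(K) := ∫₀^∞ u^{−1/2} e^{i(Ku − u³)} du is well defined (convergent as an improper integral) for every real K, and is continuous in K. -/

import Mathlib

open Real Complex Filter MeasureTheory intervalIntegral

/-!
On `[0, 1]` the singularity `u^{-1/2}` is integrable and independent of `K`, so dominated
convergence gives continuity. On `[1, ∞)` write `e^{iφ}` with `φ = Ku - u³`, so that
`φ' = K - 3u²` and `u^{-1/2} e^{iφ} = (i/3) u^{-5/2} (e^{iφ})' + (K/3) u^{-5/2} e^{iφ}`.
Integrating by parts, the boundary term is `O(T^{-5/2})` and what remains is bounded by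
`(|K| + 5/2)/3 · u^{-5/2}`, which is absolutely integrable, locally uniformly in `K`.
-/

open Set

section General

variable {E : Type*} [NormedAddCommGroup E] [NormedSpace ℝ E]

theorem tendsto_intervalIntegral_atTop_of_hasDerivAt_add [CompleteSpace E] {f G h : ℝ → E}
    {a b : ℝ} (hf : ∀ T, IntervalIntegrable f volume a T)
    (hG : ∀ u, b ≤ u → HasDerivAt G (f u + h u) u)
    (hG_tendsto : Tendsto G atTop (nhds 0)) (hh : IntegrableOn h (Ioi b)) :
    Tendsto (fun T => ∫ u in a..T, f u) atTop
      (nhds ((∫ u in a..b, f u) - G b - ∫ u in Ioi b, h u)) := by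
  have hfb : ∀ T, IntervalIntegrable f volume b T := fun T => (hf b).symm.trans (hf T)
  have hhb : ∀ T, b ≤ T → IntervalIntegrable h volume b T := fun T hT =>
    (intervalIntegrable_iff_integrableOn_Ioc_of_le hT).2 (hh.mono_set Ioc_subset_Ioi_self)
  have by_parts : ∀ T, b ≤ T →
      ∫ u in a..T, f u = (∫ u in a..b, f u) + (G T - G b - ∫ u in b..T, h u) := by
    intro T hT
    have hG' : ∀ u ∈ uIcc b T, HasDerivAt G (f u + h u) u := fun u hu =>
      hG u (uIcc_of_le hT ▸ hu).1
    rw [← integral_add_adjacent_intervals (hf b) (hfb T),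
      ← integral_eq_sub_of_hasDerivAt hG' ((hfb T).add (hhb T hT)),
      integral_add (hfb T) (hhb T hT), add_sub_cancel_right]
  have hlim := tendsto_const_nhds (x := ∫ u in a..b, f u) |>.add
    ((hG_tendsto.sub_const (G b)).sub (intervalIntegral_tendsto_integral_Ioi b hh tendsto_id))
  rw [zero_sub, ← add_sub_assoc, ← sub_eq_add_neg] at hlim
  exact hlim.congr' ((eventually_ge_atTop b).mono fun T hT => (by_parts T hT).symm)

theorem continuous_integral_of_norm_le_mul {X α : Type*} [TopologicalSpace X]
    [FirstCountableTopology X] [MeasurableSpace α] {μ : Measure α} {F : X → α → E} {C : X → ℝ}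
    {g : α → ℝ}
    (hF_meas : ∀ x, AEStronglyMeasurable (F x) μ) (hC : Continuous C) (hg : Integrable g μ)
    (h_bound : ∀ x, ∀ᵐ a ∂μ, ‖F x a‖ ≤ C x * g a)
    (h_cont : ∀ᵐ a ∂μ, Continuous fun x => F x a) :
    Continuous fun x => ∫ a, F x a ∂μ := by
  refine continuous_iff_continuousAt.2 fun x₀ => continuousAt_of_dominated
    (Eventually.of_forall hF_meas) ?_ (hg.norm.const_mul (|C x₀| + 1))
    (h_cont.mono fun a ha => ha.continuousAt)
  have hC_near : ∀ᶠ x in nhds x₀, |C x| ≤ |C x₀| + 1 :=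
    (hC.abs.continuousAt.eventually (gt_mem_nhds (lt_add_one |C x₀|))).mono fun _ => le_of_lt
  filter_upwards [hC_near] with x hx
  filter_upwards [h_bound x] with a ha
  calc ‖F x a‖ ≤ C x * g a := ha
    _ ≤ |C x| * ‖g a‖ := by rw [Real.norm_eq_abs, ← abs_mul]; exact le_abs_self _
    _ ≤ (|C x₀| + 1) * ‖g a‖ := by gcongr

end General

noncomputable section

def fockPhase (K u : ℝ) : ℂ := Complex.exp (I * ((K : ℂ) * u - (u : ℂ) ^ 3))

def fockIntegrand (K u : ℝ) : ℂ := ((1 / Real.sqrt u : ℝ) : ℂ) * fockPhase K u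

def fockPrimitive (K u : ℝ) : ℂ := I / 3 * ((u ^ (-(5/2) : ℝ) : ℝ) : ℂ) * fockPhase K u

def fockRemainder (K u : ℝ) : ℂ :=
  I / 3 * (I * K * ((u ^ (-(5/2) : ℝ) : ℝ) : ℂ)
    - 5/2 * ((u ^ (-(7/2) : ℝ) : ℝ) : ℂ)) * fockPhase K u

theorem norm_fockPhase (K u : ℝ) : ‖fockPhase K u‖ = 1 := by
  have h_real : I * ((K : ℂ) * u - (u : ℂ) ^ 3) = ((K * u - u ^ 3 : ℝ) : ℂ) * I := by
    push_cast; ring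
  rw [fockPhase, h_real, Complex.norm_exp_ofReal_mul_I]

theorem hasDerivAt_fockPhase (K u : ℝ) :
    HasDerivAt (fockPhase K) (fockPhase K u * (I * (K - 3 * u ^ 2))) u := by
  have hφ : HasDerivAt (fun z : ℂ => I * (K * z - z ^ 3)) (I * (K - 3 * u ^ 2)) u := by
    simpa using (((hasDerivAt_id (u : ℂ)).const_mul (K : ℂ)).sub
      (hasDerivAt_pow 3 (u : ℂ))).const_mul I
  exact hφ.cexp.comp_ofReal

theorem hasDerivAt_fockPrimitive (K : ℝ) {u : ℝ} (hu : 0 < u) :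
    HasDerivAt (fockPrimitive K) (fockIntegrand K u + fockRemainder K u) u := by
  have hpow : HasDerivAt (fun u : ℝ => ((u ^ (-(5/2) : ℝ) : ℝ) : ℂ))
      (((-(5/2) * u ^ (-(7/2) : ℝ) : ℝ)) : ℂ) u := by
    refine HasDerivAt.ofReal_comp ?_
    convert Real.hasDerivAt_rpow_const (p := -(5/2)) (Or.inl hu.ne') using 2
    norm_num
  refine ((hpow.const_mul (I / 3)).mul (hasDerivAt_fockPhase K u)).congr_deriv ?_
  have h_sqrt : 1 / Real.sqrt u = u ^ 2 * u ^ (-(5/2) : ℝ) := by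
    rw [Real.sqrt_eq_rpow, ← Real.rpow_natCast, ← Real.rpow_add hu, one_div,
      ← Real.rpow_neg hu.le]
    norm_num
  rw [fockIntegrand, fockRemainder, h_sqrt]
  push_cast
  linear_combination -((u ^ (-(5/2) : ℝ) : ℝ) : ℂ) * fockPhase K u * (u:ℂ) ^ 2 * I_sq

theorem measurable_fockIntegrand (K : ℝ) : Measurable (fockIntegrand K) := by
  unfold fockIntegrand fockPhase; fun_prop

theorem norm_fockIntegrand_le (K u : ℝ) :
    ‖fockIntegrand K u‖ ≤ ‖u ^ (-(1/2) : ℝ)‖ := by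
  rw [fockIntegrand, norm_mul, norm_fockPhase, mul_one, Complex.norm_real]
  rcases le_or_gt u 0 with hu | hu
  · -- `√u = 0` for `u ≤ 0`, and `1 / 0 = 0`
    simp [Real.sqrt_eq_zero'.2 hu]
  · rw [Real.sqrt_eq_rpow, Real.rpow_neg hu.le, one_div]

theorem intervalIntegrable_fockIntegrand (K a b : ℝ) :
    IntervalIntegrable (fockIntegrand K) volume a b :=
  (intervalIntegrable_rpow' (r := -(1/2)) (by norm_num)).mono_fun
    (measurable_fockIntegrand K).aestronglyMeasurable
    (Eventually.of_forall (norm_fockIntegrand_le K))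

theorem norm_fockPrimitive {u : ℝ} (K : ℝ) (hu : 0 ≤ u) :
    ‖fockPrimitive K u‖ = u ^ (-(5/2) : ℝ) / 3 := by
  rw [fockPrimitive, norm_mul, norm_mul, norm_fockPhase, Complex.norm_real, Real.norm_of_nonneg
    (Real.rpow_nonneg hu _)]
  simp; ring

theorem tendsto_fockPrimitive_atTop (K : ℝ) : Tendsto (fockPrimitive K) atTop (nhds 0) := by
  refine tendsto_zero_iff_norm_tendsto_zero.2 ?_
  have h := (tendsto_rpow_neg_atTop (y := 5/2) (by norm_num)).div_const 3
  rw [zero_div] at h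
  exact h.congr' ((eventually_ge_atTop 0).mono fun u hu => (norm_fockPrimitive K hu).symm)

theorem norm_fockRemainder_le {u : ℝ} (K : ℝ) (hu : 1 ≤ u) :
    ‖fockRemainder K u‖ ≤ (|K| + 5/2) / 3 * u ^ (-(5/2) : ℝ) := by
  have hu₀ : 0 ≤ u := zero_le_one.trans hu
  have h_decay : u ^ (-(7/2) : ℝ) ≤ u ^ (-(5/2) : ℝ) :=
    Real.rpow_le_rpow_of_exponent_le hu (by norm_num)
  rw [fockRemainder, norm_mul, norm_fockPhase, mul_one, norm_mul]
  calc ‖I / 3‖ * ‖I * K * ((u ^ (-(5/2) : ℝ) : ℝ) : ℂ)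
        - 5/2 * ((u ^ (-(7/2) : ℝ) : ℝ) : ℂ)‖
      ≤ 1/3 * (|K| * u ^ (-(5/2) : ℝ) + 5/2 * u ^ (-(7/2) : ℝ)) := by
        refine mul_le_mul (by simp) ((norm_sub_le _ _).trans (le_of_eq ?_)) (norm_nonneg _)
          (by norm_num)
        simp [abs_of_nonneg (Real.rpow_nonneg hu₀ _)]
    _ ≤ (|K| + 5/2) / 3 * u ^ (-(5/2) : ℝ) := by nlinarith [abs_nonneg K]

theorem integrableOn_fockRemainder (K : ℝ) : IntegrableOn (fockRemainder K) (Ioi 1) := by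
  refine ((integrableOn_Ioi_rpow_of_lt (a := -(5/2)) (by norm_num) one_pos).const_mul
    ((|K| + 5/2) / 3)).mono' (by unfold fockRemainder fockPhase; fun_prop) ?_
  filter_upwards [ae_restrict_mem measurableSet_Ioi] with u hu
  exact norm_fockRemainder_le K (le_of_lt hu)

def fockIntegral (K : ℝ) : ℂ :=
  (∫ u in (0:ℝ)..1, fockIntegrand K u) - fockPrimitive K 1 - ∫ u in Ioi 1, fockRemainder K u

theorem tendsto_intervalIntegral_fockIntegrand (K : ℝ) :
    Tendsto (fun T => ∫ u in (0:ℝ)..T, fockIntegrand K u) atTop (nhds (fockIntegral K)) :=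
  tendsto_intervalIntegral_atTop_of_hasDerivAt_add (intervalIntegrable_fockIntegrand K 0)
    (fun _ hu => hasDerivAt_fockPrimitive K (one_pos.trans_le hu))
    (tendsto_fockPrimitive_atTop K) (integrableOn_fockRemainder K)

theorem continuous_fockIntegral : Continuous fockIntegral := by
  have h_near : Continuous fun K => ∫ u in (0:ℝ)..1, fockIntegrand K u :=
    continuous_of_dominated_interval (fun K => (measurable_fockIntegrand K).aestronglyMeasurable)
      (fun K => Eventually.of_forall fun u _ => norm_fockIntegrand_le K u)
      (intervalIntegrable_rpow' (by norm_num)).norm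
      (Eventually.of_forall fun u _ => by unfold fockIntegrand fockPhase; fun_prop)
  have h_far : Continuous fun K => ∫ u in Ioi 1, fockRemainder K u :=
    continuous_integral_of_norm_le_mul
      (fun K => by unfold fockRemainder fockPhase; fun_prop) (by fun_prop)
      (integrableOn_Ioi_rpow_of_lt (a := -(5/2)) (by norm_num) one_pos)
      (fun K => (ae_restrict_mem measurableSet_Ioi).mono fun u hu =>
        norm_fockRemainder_le K (le_of_lt hu))
      (Eventually.of_forall fun u => by unfold fockRemainder fockPhase; fun_prop)
  exact (h_near.sub (by unfold fockPrimitive fockPhase; fun_prop)).sub h_far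

end

/-- **Well-posedness of the Fock integral `F(K) = ∫₀^∞ u^{−1/2}e^{i(Ku−u³)}du`.**
There is a continuous function `F : ℝ → ℂ` such that for every real `K` the
truncated integrals `∫₀^T u^{−1/2} e^{i(Ku − u³)} du` converge to `F K` as
`T → ∞`; i.e. the oscillatory improper integral converges for every `K` and
depends continuously on `K`. -/
theorem fock_integral_wellDefined_continuous :
    ∃ F : ℝ → ℂ, Continuous F ∧ ∀ K : ℝ,
      Tendsto
        (fun T : ℝ => ∫ u in (0:ℝ)..T,
          ((1 / Real.sqrt u : ℝ) : ℂ) *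
            Complex.exp (Complex.I * ((K:ℂ) * (u:ℂ) - (u:ℂ) ^ 3)))
        atTop (nhds (F K)) :=
  ⟨fockIntegral, continuous_fockIntegral, tendsto_intervalIntegral_fockIntegrand⟩
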